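/- Let ψ_m := φ_m ⊗ φ_m ∈ ℂ⁴ (Kronecker product) for m = 0, 1, 2, 3, and define the 4×4 Hermitian matrices L := (1/2)P(ψ₁) + P(ψ₂) + (1/2)P(ψ₃) and B := (1/2)P(ψ₀) + P(ψ₁) + (3/2)P(ψ₂) + P(ψ₃). Then L - ((3 - √2)/7)·B is positive semidefinite, and the bound is attained: there exists a vector v ∈ ℂ⁴ with (L - ((3 - √2)/7)·B)v = 0 and Bv ≠ 0. Hence the minimum bit error rate Eve induces in two-photon SARG04 by a POVM intercept-and-resend attack resending SARG04 states is (3 - √2)/7 ≈ 22.65%. -/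

import Mathlib

open Matrix Real
open scoped ComplexOrder

noncomputable section

/-- Standard basis vector `e₀` of `ℂ²`. -/
def e0 : Fin 2 → ℂ := ![1, 0]
/-- Standard basis vector `e₁` of `ℂ²`. -/
def e1 : Fin 2 → ℂ := ![0, 1]

/-- `P(v) = v v†`, the rank-one matrix associated with `v ∈ ℂ²`. -/
def P (v : Fin 2 → ℂ) : Matrix (Fin 2) (Fin 2) ℂ := vecMulVec v (star v)

/-- The rotation `R = cos(π/4)·I + sin(π/4)·(e₁e₀† - e₀e₁†)`. -/
def Rrot : Matrix (Fin 2) (Fin 2) ℂ :=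
  (Real.cos (π / 4) : ℂ) • 1 +
    (Real.sin (π / 4) : ℂ) • (vecMulVec e1 (star e0) - vecMulVec e0 (star e1))

/-- The SARG04 states `φ_m = R^{-m} φ₀` with `φ₀ = cos(π/8) e₀ + sin(π/8) e₁`,
indices effectively taken modulo 4. -/
def φ (m : ℤ) : Fin 2 → ℂ :=
  (Rrot ^ (-m)).mulVec ((Real.cos (π / 8) : ℂ) • e0 + (Real.sin (π / 8) : ℂ) • e1)
/-- Kronecker (tensor) product of two vectors in `ℂ²`, giving a vector in `ℂ² ⊗ ℂ² ≅ ℂ⁴`. -/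
def tensor (v w : Fin 2 → ℂ) : Fin 2 × Fin 2 → ℂ := fun p => v p.1 * w p.2

/-- `P₄(v) = v v†`, the rank-one `4×4` matrix associated with `v ∈ ℂ⁴`. -/
def P4 (v : Fin 2 × Fin 2 → ℂ) : Matrix (Fin 2 × Fin 2) (Fin 2 × Fin 2) ℂ :=
  vecMulVec v (star v)

/-- The two-photon SARG04 states `ψ_m = φ_m ⊗ φ_m` (indices mod 4). -/
def ψ (m : ℤ) : Fin 2 × Fin 2 → ℂ := tensor (φ m) (φ m)
/-- The matrix `L` for the two-photon SARG04 intercept-and-resend analysis. -/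
def L2 : Matrix (Fin 2 × Fin 2) (Fin 2 × Fin 2) ℂ :=
  ((1 : ℂ) / 2) • P4 (ψ 1) + P4 (ψ 2) + ((1 : ℂ) / 2) • P4 (ψ 3)

/-- The matrix `B` for the two-photon SARG04 intercept-and-resend analysis. -/
def B2 : Matrix (Fin 2 × Fin 2) (Fin 2 × Fin 2) ℂ :=
  ((1 : ℂ) / 2) • P4 (ψ 0) + P4 (ψ 1) + ((3 : ℂ) / 2) • P4 (ψ 2) + P4 (ψ 3)

/-! Since `R` is the rotation by `π/4`, the SARG04 states are the real unit vectors
`φ_m = (cos θ_m, sin θ_m)` with `θ_m = π/8 - mπ/4`. Expressing the entries of `L` and `B` through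
`cos²(π/8) = 1/2 + √2/4`, `sin²(π/8) = 1/2 - √2/4` and `cos(π/8) sin(π/8) = √2/4` gives
`L - ((3 - √2)/7) B = ((1 + 2√2)/28) (P(u) + 4 P(e₁ ⊗ e₁))` with `u = (e₀ - e₁) ⊗ (e₀ - e₁)`,
a nonnegative combination of positive semidefinite rank-one matrices. The vector
`v = e₀ ⊗ (e₀ + e₁)` is orthogonal to `u` and to `e₁ ⊗ e₁`, while `(B v)₀₀ = 3/2 - 3√2/8 ≠ 0`. -/

def rotMatrix (θ : ℝ) : Matrix (Fin 2) (Fin 2) ℂ :=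
  !![(Real.cos θ : ℂ), -(Real.sin θ : ℂ); (Real.sin θ : ℂ), (Real.cos θ : ℂ)]

def cosSinVec (θ : ℝ) : Fin 2 → ℂ := ![(Real.cos θ : ℂ), (Real.sin θ : ℂ)]

lemma rotMatrix_mulVec_cosSinVec (θ α : ℝ) :
    rotMatrix θ *ᵥ cosSinVec α = cosSinVec (θ + α) := by
  rw [rotMatrix, cosSinVec, cosSinVec, mulVec_fin_two, Real.cos_add, Real.sin_add]
  simp only [of_apply, cons_val', cons_val_zero, cons_val_one, cons_val_fin_one]
  push_cast
  ring_nf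

lemma rotMatrix_mul_rotMatrix (a b : ℝ) : rotMatrix a * rotMatrix b = rotMatrix (a + b) := by
  rw [rotMatrix, rotMatrix, rotMatrix, mul_fin_two, Real.cos_add, Real.sin_add]
  push_cast
  ring_nf

lemma rotMatrix_zero : rotMatrix 0 = 1 := by
  rw [rotMatrix, one_fin_two]; simp

lemma det_rotMatrix (θ : ℝ) : (rotMatrix θ).det = 1 := by
  rw [rotMatrix, det_fin_two_of]
  have h : (Real.cos θ : ℂ) ^ 2 + (Real.sin θ : ℂ) ^ 2 = 1 := by
    exact_mod_cast Real.cos_sq_add_sin_sq θ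
  linear_combination h

lemma inv_rotMatrix (θ : ℝ) : (rotMatrix θ)⁻¹ = rotMatrix (-θ) :=
  inv_eq_right_inv (by rw [rotMatrix_mul_rotMatrix, add_neg_cancel, rotMatrix_zero])

lemma rotMatrix_zpow (θ : ℝ) (n : ℤ) : rotMatrix θ ^ n = rotMatrix (n * θ) := by
  have hdet : IsUnit (rotMatrix θ).det := by simp [det_rotMatrix]
  induction n using Int.induction_on with
  | zero => simp [rotMatrix_zero]
  | succ n ih =>
    rw [zpow_add_one hdet, ih, rotMatrix_mul_rotMatrix]; push_cast; ring_nf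
  | pred n ih =>
    rw [zpow_sub_one hdet, ih, inv_rotMatrix, rotMatrix_mul_rotMatrix]; push_cast; ring_nf

lemma Rrot_eq_rotMatrix : Rrot = rotMatrix (π / 4) := by
  ext i j
  fin_cases i <;> fin_cases j <;> simp [Rrot, rotMatrix, e0, e1, vecMulVec_apply, one_apply,
    -cons_vecMulVec, -vecMulVec_cons]

lemma φ_eq_cosSinVec (m : ℤ) : φ m = cosSinVec (π / 8 - m * (π / 4)) := by
  have h0 : (Real.cos (π / 8) : ℂ) • e0 + (Real.sin (π / 8) : ℂ) • e1 = cosSinVec (π / 8) := by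
    ext i; fin_cases i <;> simp [e0, e1, cosSinVec]
  rw [φ, h0, Rrot_eq_rotMatrix, rotMatrix_zpow, rotMatrix_mulVec_cosSinVec]
  push_cast; ring_nf

lemma φ_zero : φ 0 = ![(Real.cos (π / 8) : ℂ), (Real.sin (π / 8) : ℂ)] := by
  simp [φ_eq_cosSinVec, cosSinVec]

lemma φ_one : φ 1 = ![(Real.cos (π / 8) : ℂ), -(Real.sin (π / 8) : ℂ)] := by
  rw [φ_eq_cosSinVec, show π / 8 - ((1 : ℤ) : ℝ) * (π / 4) = -(π / 8) by push_cast; ring]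
  simp [cosSinVec]

lemma φ_two : φ 2 = ![(Real.sin (π / 8) : ℂ), -(Real.cos (π / 8) : ℂ)] := by
  rw [φ_eq_cosSinVec, show π / 8 - ((2 : ℤ) : ℝ) * (π / 4) = π / 8 - π / 2 by push_cast; ring]
  simp [cosSinVec, Real.cos_sub_pi_div_two, Real.sin_sub_pi_div_two]

lemma φ_three : φ 3 = ![-(Real.sin (π / 8) : ℂ), -(Real.cos (π / 8) : ℂ)] := by
  rw [φ_eq_cosSinVec, show π / 8 - ((3 : ℤ) : ℝ) * (π / 4) = -(π / 8 + π / 2) by push_cast; ring]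
  simp only [cosSinVec, Real.cos_neg, Real.sin_neg, Real.cos_add_pi_div_two,
    Real.sin_add_pi_div_two, Complex.ofReal_neg]

lemma ofReal_sqrt_two_sq : (√2 : ℂ) ^ 2 = 2 := by
  exact_mod_cast Real.sq_sqrt zero_le_two

lemma ofReal_cos_pi_div_eight_sq : (Real.cos (π / 8) : ℂ) ^ 2 = 1 / 2 + √2 / 4 := by
  rw [← Complex.ofReal_pow, Real.cos_sq, show 2 * (π / 8) = π / 4 by ring, Real.cos_pi_div_four]
  push_cast; ring

lemma ofReal_sin_pi_div_eight_sq : (Real.sin (π / 8) : ℂ) ^ 2 = 1 / 2 - √2 / 4 := by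
  rw [← Complex.ofReal_pow, Real.sin_sq, Complex.ofReal_sub, Complex.ofReal_one,
    Complex.ofReal_pow, ofReal_cos_pi_div_eight_sq]
  ring

lemma ofReal_cos_mul_sin_pi_div_eight : (Real.cos (π / 8) : ℂ) * Real.sin (π / 8) = √2 / 4 := by
  have h := Real.sin_two_mul (π / 8)
  rw [show 2 * (π / 8) = π / 4 by ring, Real.sin_pi_div_four] at h
  rw [← Complex.ofReal_mul, show Real.cos (π / 8) * Real.sin (π / 8) = √2 / 4 by linarith]
  push_cast; ring

lemma star_cosSinVec (θ : ℝ) : star (cosSinVec θ) = cosSinVec θ := by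
  ext i; fin_cases i <;> exact Complex.conj_ofReal _

lemma star_tensor (v w : Fin 2 → ℂ) : star (tensor v w) = tensor (star v) (star w) := by
  ext p; simp [tensor]

lemma dotProduct_tensor (a b c d : Fin 2 → ℂ) :
    tensor a b ⬝ᵥ tensor c d = (a ⬝ᵥ c) * (b ⬝ᵥ d) := by
  simp only [tensor, dotProduct, Fintype.sum_prod_type, Finset.sum_mul_sum]
  exact Finset.sum_congr rfl fun _ _ => Finset.sum_congr rfl fun _ _ => by ring

lemma P4_mulVec (w v : Fin 2 × Fin 2 → ℂ) : P4 w *ᵥ v = (star w ⬝ᵥ v) • w := by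
  rw [P4, vecMulVec_mulVec, op_smul_eq_smul]

lemma P4_ψ (m : ℤ) : P4 (ψ m) = vecMulVec (ψ m) (ψ m) := by
  rw [P4, ψ, star_tensor, φ_eq_cosSinVec, star_cosSinVec]

lemma L2_sub_smul_B2 :
    L2 - (((3 - √2) / 7 : ℝ) : ℂ) • B2 =
      ((1 + 2 * √2) / 28 : ℝ) •
        (P4 (tensor (e0 - e1) (e0 - e1)) + (4 : ℝ) • P4 (tensor e1 e1)) := by
  simp only [L2, B2, P4_ψ]
  simp only [ψ, φ_zero, φ_one, φ_two, φ_three, Complex.ofReal_div, Complex.ofReal_sub,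
    Complex.ofReal_ofNat]
  ext ⟨i, j⟩ ⟨k, l⟩
  fin_cases i <;> fin_cases j <;> fin_cases k <;> fin_cases l <;>
    simp only [Fin.zero_eta, Fin.mk_one, Matrix.sub_apply, Matrix.add_apply, Matrix.smul_apply,
      P4, vecMulVec_apply, tensor, e0, e1, sub_cons, cons_val_zero, cons_val_one,
      cons_val_fin_one, head_cons, tail_cons, sub_zero, zero_sub, Pi.star_apply, star_mul',
      star_neg, star_one, star_zero, smul_eq_mul, Complex.real_smul, Complex.ofReal_div,
      Complex.ofReal_add, Complex.ofReal_mul, Complex.ofReal_one, Complex.ofReal_ofNat] <;>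
    grind [ofReal_sqrt_two_sq, ofReal_cos_pi_div_eight_sq, ofReal_sin_pi_div_eight_sq,
      ofReal_cos_mul_sin_pi_div_eight]

lemma L2_sub_smul_B2_mulVec_eq_zero :
    (L2 - (((3 - √2) / 7 : ℝ) : ℂ) • B2) *ᵥ tensor e0 (e0 + e1) = 0 := by
  have hu : star (tensor (e0 - e1) (e0 - e1)) ⬝ᵥ tensor e0 (e0 + e1) = 0 := by
    rw [star_tensor, dotProduct_tensor]
    simp [e0, e1, dotProduct, Fin.sum_univ_two]
  have he : star (tensor e1 e1) ⬝ᵥ tensor e0 (e0 + e1) = 0 := by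
    rw [star_tensor, dotProduct_tensor]
    simp [e0, e1, dotProduct, Fin.sum_univ_two]
  rw [L2_sub_smul_B2, smul_mulVec, add_mulVec, smul_mulVec, P4_mulVec, P4_mulVec, hu, he]
  simp

lemma B2_mulVec_apply :
    (B2 *ᵥ tensor e0 (e0 + e1)) (0, 0) = ((3 / 2 - 3 * √2 / 8 : ℝ) : ℂ) := by
  simp only [B2, P4_ψ]
  simp only [ψ, φ_zero, φ_one, φ_two, φ_three]
  simp only [mulVec, dotProduct, Fintype.sum_prod_type, Fin.sum_univ_two, Matrix.add_apply,
    Matrix.smul_apply, vecMulVec_apply, tensor, e0, e1, Pi.add_apply, cons_val_zero,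
    cons_val_one, cons_val_fin_one, smul_eq_mul, Complex.ofReal_sub, Complex.ofReal_div,
    Complex.ofReal_mul, Complex.ofReal_ofNat]
  grind [ofReal_sqrt_two_sq, ofReal_cos_pi_div_eight_sq, ofReal_sin_pi_div_eight_sq,
    ofReal_cos_mul_sin_pi_div_eight]

/-- `L - ((3 - √2)/7) B` is positive semidefinite and the bound is attained:
the minimum bit error rate Eve induces in two-photon SARG04 by a POVM
intercept-and-resend attack resending SARG04 states is `(3 - √2)/7`. -/
theorem sarg04_two_photon_min_ber :
    (L2 - (((3 - Real.sqrt 2) / 7 : ℝ) : ℂ) • B2).PosSemidef ∧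
    ∃ v : Fin 2 × Fin 2 → ℂ,
      (L2 - (((3 - Real.sqrt 2) / 7 : ℝ) : ℂ) • B2).mulVec v = 0 ∧ B2.mulVec v ≠ 0 := by
  refine ⟨?_, tensor e0 (e0 + e1), L2_sub_smul_B2_mulVec_eq_zero, fun h => ?_⟩
  · rw [L2_sub_smul_B2]
    refine PosSemidef.smul ?_ (by positivity)
    exact (posSemidef_vecMulVec_self_star _).add
      ((posSemidef_vecMulVec_self_star _).smul (by norm_num))
  · have h0 := B2_mulVec_apply
    rw [h, Pi.zero_apply, eq_comm, Complex.ofReal_eq_zero] at h0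
    nlinarith [Real.sqrt_nonneg 2, Real.sq_sqrt (zero_le_two : (0 : ℝ) ≤ 2)]

end
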